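/- arXiv:2103.02402 — 7 statements merged into one kernel-verified Lean document; each statement's English description precedes it below -/
import Mathlib

section
/- In a finite economic environment, BFR^∞ is the largest fixed point: if (F_1, F_2) is any pair of correspondences F_i : Θ_i → P(A_i) satisfying the fixed-point property that for all i, θ_i, F_i(θ_i) = {a_i ∈ A_i : ∃ μ_i ∈ Δ(Θ_0 × Θ_{-i} × A_{-i}) with supp μ_i ⊆ Θ_0 × graph(F_{-i}) and a_i ∈ BR_i(μ_i; θ_i)}, then F_i(θ_i) ⊆ BFR_i^∞(θ_i) for all i and θ_i. -/
open Finset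

section Defs

variable {Θ0 Θ1 Θ2 A1 A2 Y1 Y2 : Type}
variable [Fintype Θ0] [Fintype Θ1] [Fintype Θ2] [Fintype A1] [Fintype A2]
variable [Fintype Y1] [Fintype Y2]

/-- A probability distribution on a finite type, encoded as a nonnegative
function summing to one. -/
def IsProb {X : Type} [Fintype X] (μ : X → ℝ) : Prop :=
  (∀ x, 0 ≤ μ x) ∧ ∑ x, μ x = 1

/-- Expected utility of player 1 of action `a1` with payoff type `θ1` under
conjecture `μ` on `Θ0 × Θ2 × A2`. -/
def EU1 (u1 : A1 → A2 → Θ0 → Θ1 → Θ2 → ℝ) (μ : Θ0 × Θ2 × A2 → ℝ)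
    (a1 : A1) (θ1 : Θ1) : ℝ :=
  ∑ x : Θ0 × Θ2 × A2, μ x * u1 a1 x.2.2 x.1 θ1 x.2.1

def EU2 (u2 : A1 → A2 → Θ0 → Θ1 → Θ2 → ℝ) (μ : Θ0 × Θ1 × A1 → ℝ)
    (a2 : A2) (θ2 : Θ2) : ℝ :=
  ∑ x : Θ0 × Θ1 × A1, μ x * u2 x.2.2 a2 x.1 x.2.1 θ2

/-- Best replies of player 1 against conjecture `μ` for payoff type `θ1`. -/
def BR1 (u1 : A1 → A2 → Θ0 → Θ1 → Θ2 → ℝ) (μ : Θ0 × Θ2 × A2 → ℝ) (θ1 : Θ1) : Set A1 :=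
  {a1 | ∀ b1, EU1 u1 μ b1 θ1 ≤ EU1 u1 μ a1 θ1}

def BR2 (u2 : A1 → A2 → Θ0 → Θ1 → Θ2 → ℝ) (μ : Θ0 × Θ1 × A1 → ℝ) (θ2 : Θ2) : Set A2 :=
  {a2 | ∀ b2, EU2 u2 μ b2 θ2 ≤ EU2 u2 μ a2 θ2}

/-- One elimination step of belief-free rationalizability for player 1, given the
opponent's surviving correspondence `F2`. -/
def step1 (u1 : A1 → A2 → Θ0 → Θ1 → Θ2 → ℝ) (F2 : Θ2 → Set A2) (θ1 : Θ1) : Set A1 :=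
  {a1 | ∃ μ : Θ0 × Θ2 × A2 → ℝ, IsProb μ ∧
    (∀ x, μ x ≠ 0 → x.2.2 ∈ F2 x.2.1) ∧ a1 ∈ BR1 u1 μ θ1}

def step2 (u2 : A1 → A2 → Θ0 → Θ1 → Θ2 → ℝ) (F1 : Θ1 → Set A1) (θ2 : Θ2) : Set A2 :=
  {a2 | ∃ μ : Θ0 × Θ1 × A1 → ℝ, IsProb μ ∧
    (∀ x, μ x ≠ 0 → x.2.2 ∈ F1 x.2.1) ∧ a2 ∈ BR2 u2 μ θ2}

/-- The iterative belief-free rationalizability procedure (both players). -/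
def BFR (u1 u2 : A1 → A2 → Θ0 → Θ1 → Θ2 → ℝ) :
    ℕ → (Θ1 → Set A1) × (Θ2 → Set A2)
  | 0 => (fun _ => Set.univ, fun _ => Set.univ)
  | n + 1 =>
      (fun θ1 => (BFR u1 u2 n).1 θ1 ∩ step1 u1 (BFR u1 u2 n).2 θ1,
       fun θ2 => (BFR u1 u2 n).2 θ2 ∩ step2 u2 (BFR u1 u2 n).1 θ2)

def BFRinf1 (u1 u2 : A1 → A2 → Θ0 → Θ1 → Θ2 → ℝ) (θ1 : Θ1) : Set A1 :=
  ⋂ n, (BFR u1 u2 n).1 θ1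

def BFRinf2 (u1 u2 : A1 → A2 → Θ0 → Θ1 → Θ2 → ℝ) (θ2 : Θ2) : Set A2 :=
  ⋂ n, (BFR u1 u2 n).2 θ2

/-- Marginal on `Θ0 × Θ2 × A2` of a belief on `Θ0 × Θ2 × Y2 × A2`. -/
def margA1 (μ : Θ0 × Θ2 × Y2 × A2 → ℝ) : Θ0 × Θ2 × A2 → ℝ :=
  fun x => ∑ y2 : Y2, μ (x.1, x.2.1, y2, x.2.2)

/-- Marginal on `Θ0 × Θ2 × Y2` of a belief on `Θ0 × Θ2 × Y2 × A2`. -/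
def margY1 (μ : Θ0 × Θ2 × Y2 × A2 → ℝ) : Θ0 × Θ2 × Y2 → ℝ :=
  fun x => ∑ a2 : A2, μ (x.1, x.2.1, x.2.2, a2)

def margA2 (μ : Θ0 × Θ1 × Y1 × A1 → ℝ) : Θ0 × Θ1 × A1 → ℝ :=
  fun x => ∑ y1 : Y1, μ (x.1, x.2.1, y1, x.2.2)

def margY2 (μ : Θ0 × Θ1 × Y1 × A1 → ℝ) : Θ0 × Θ1 × Y1 → ℝ :=
  fun x => ∑ a1 : A1, μ (x.1, x.2.1, x.2.2, a1)

/-- One elimination step of interim correlated rationalizability for player 1. -/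
def istep1 (u1 : A1 → A2 → Θ0 → Θ1 → Θ2 → ℝ)
    (π1 : Θ1 → Y1 → (Θ0 × Θ2 × Y2 → ℝ)) (F2 : Θ2 → Y2 → Set A2)
    (θ1 : Θ1) (y1 : Y1) : Set A1 :=
  {a1 | ∃ μ : Θ0 × Θ2 × Y2 × A2 → ℝ, IsProb μ ∧
    (∀ x, μ x ≠ 0 → x.2.2.2 ∈ F2 x.2.1 x.2.2.1) ∧
    margY1 μ = π1 θ1 y1 ∧ a1 ∈ BR1 u1 (margA1 μ) θ1}

def istep2 (u2 : A1 → A2 → Θ0 → Θ1 → Θ2 → ℝ)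
    (π2 : Θ2 → Y2 → (Θ0 × Θ1 × Y1 → ℝ)) (F1 : Θ1 → Y1 → Set A1)
    (θ2 : Θ2) (y2 : Y2) : Set A2 :=
  {a2 | ∃ μ : Θ0 × Θ1 × Y1 × A1 → ℝ, IsProb μ ∧
    (∀ x, μ x ≠ 0 → x.2.2.2 ∈ F1 x.2.1 x.2.2.1) ∧
    margY2 μ = π2 θ2 y2 ∧ a2 ∈ BR2 u2 (margA2 μ) θ2}

/-- The iterative interim correlated rationalizability procedure in the Bayesian
game with information structure `(Y1, Y2, π1, π2)`. -/
def ICR (u1 u2 : A1 → A2 → Θ0 → Θ1 → Θ2 → ℝ)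
    (π1 : Θ1 → Y1 → (Θ0 × Θ2 × Y2 → ℝ)) (π2 : Θ2 → Y2 → (Θ0 × Θ1 × Y1 → ℝ)) :
    ℕ → (Θ1 → Y1 → Set A1) × (Θ2 → Y2 → Set A2)
  | 0 => (fun _ _ => Set.univ, fun _ _ => Set.univ)
  | n + 1 =>
      (fun θ1 y1 => (ICR u1 u2 π1 π2 n).1 θ1 y1 ∩
          istep1 u1 π1 (ICR u1 u2 π1 π2 n).2 θ1 y1,
       fun θ2 y2 => (ICR u1 u2 π1 π2 n).2 θ2 y2 ∩
          istep2 u2 π2 (ICR u1 u2 π1 π2 n).1 θ2 y2)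

def ICRinf1 (u1 u2 : A1 → A2 → Θ0 → Θ1 → Θ2 → ℝ)
    (π1 : Θ1 → Y1 → (Θ0 × Θ2 × Y2 → ℝ)) (π2 : Θ2 → Y2 → (Θ0 × Θ1 × Y1 → ℝ))
    (θ1 : Θ1) (y1 : Y1) : Set A1 :=
  ⋂ n, (ICR u1 u2 π1 π2 n).1 θ1 y1

def ICRinf2 (u1 u2 : A1 → A2 → Θ0 → Θ1 → Θ2 → ℝ)
    (π1 : Θ1 → Y1 → (Θ0 × Θ2 × Y2 → ℝ)) (π2 : Θ2 → Y2 → (Θ0 × Θ1 × Y1 → ℝ))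
    (θ2 : Θ2) (y2 : Y2) : Set A2 :=
  ⋂ n, (ICR u1 u2 π1 π2 n).2 θ2 y2

/-- Distribution over `(θ0, θ_{-i}, a_{-i})` induced by `π1(θ1,y1)` and the
opponent's strategy `s2`. -/
def push1 [DecidableEq A2] (π1 : Θ1 → Y1 → (Θ0 × Θ2 × Y2 → ℝ))
    (s2 : Θ2 → Y2 → A2) (θ1 : Θ1) (y1 : Y1) : Θ0 × Θ2 × A2 → ℝ :=
  fun x => ∑ y2 : Y2, if s2 x.2.1 y2 = x.2.2 then π1 θ1 y1 (x.1, x.2.1, y2) else 0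

def push2 [DecidableEq A1] (π2 : Θ2 → Y2 → (Θ0 × Θ1 × Y1 → ℝ))
    (s1 : Θ1 → Y1 → A1) (θ2 : Θ2) (y2 : Y2) : Θ0 × Θ1 × A1 → ℝ :=
  fun x => ∑ y1 : Y1, if s1 x.2.1 y1 = x.2.2 then π2 θ2 y2 (x.1, x.2.1, y1) else 0

/-- Bayes-Nash equilibrium of the Bayesian game. -/
def IsBNE [DecidableEq A1] [DecidableEq A2]
    (u1 u2 : A1 → A2 → Θ0 → Θ1 → Θ2 → ℝ)
    (π1 : Θ1 → Y1 → (Θ0 × Θ2 × Y2 → ℝ)) (π2 : Θ2 → Y2 → (Θ0 × Θ1 × Y1 → ℝ))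
    (s1 : Θ1 → Y1 → A1) (s2 : Θ2 → Y2 → A2) : Prop :=
  (∀ θ1 y1, s1 θ1 y1 ∈ BR1 u1 (push1 π1 s2 θ1 y1) θ1) ∧
  (∀ θ2 y2, s2 θ2 y2 ∈ BR2 u2 (push2 π2 s1 θ2 y2) θ2)

/-- One elimination step of Δ-rationalizability for player 1 under the
informational restriction `D1`. -/
def dstep1 (u1 : A1 → A2 → Θ0 → Θ1 → Θ2 → ℝ)
    (D1 : Θ1 → Set (Θ0 × Θ2 → ℝ)) (F2 : Θ2 → Set A2) (θ1 : Θ1) : Set A1 :=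
  {a1 | ∃ μ : Θ0 × Θ2 × A2 → ℝ, IsProb μ ∧
    (fun p : Θ0 × Θ2 => ∑ a2 : A2, μ (p.1, p.2, a2)) ∈ D1 θ1 ∧
    (∀ x, μ x ≠ 0 → x.2.2 ∈ F2 x.2.1) ∧ a1 ∈ BR1 u1 μ θ1}

def dstep2 (u2 : A1 → A2 → Θ0 → Θ1 → Θ2 → ℝ)
    (D2 : Θ2 → Set (Θ0 × Θ1 → ℝ)) (F1 : Θ1 → Set A1) (θ2 : Θ2) : Set A2 :=
  {a2 | ∃ μ : Θ0 × Θ1 × A1 → ℝ, IsProb μ ∧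
    (fun p : Θ0 × Θ1 => ∑ a1 : A1, μ (p.1, p.2, a1)) ∈ D2 θ2 ∧
    (∀ x, μ x ≠ 0 → x.2.2 ∈ F1 x.2.1) ∧ a2 ∈ BR2 u2 μ θ2}

/-- The iterative Δ-rationalizability procedure. -/
def DR (u1 u2 : A1 → A2 → Θ0 → Θ1 → Θ2 → ℝ)
    (D1 : Θ1 → Set (Θ0 × Θ2 → ℝ)) (D2 : Θ2 → Set (Θ0 × Θ1 → ℝ)) :
    ℕ → (Θ1 → Set A1) × (Θ2 → Set A2)
  | 0 => (fun _ => Set.univ, fun _ => Set.univ)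
  | n + 1 =>
      (fun θ1 => (DR u1 u2 D1 D2 n).1 θ1 ∩ dstep1 u1 D1 (DR u1 u2 D1 D2 n).2 θ1,
       fun θ2 => (DR u1 u2 D1 D2 n).2 θ2 ∩ dstep2 u2 D2 (DR u1 u2 D1 D2 n).1 θ2)

def DRinf1 (u1 u2 : A1 → A2 → Θ0 → Θ1 → Θ2 → ℝ)
    (D1 : Θ1 → Set (Θ0 × Θ2 → ℝ)) (D2 : Θ2 → Set (Θ0 × Θ1 → ℝ)) (θ1 : Θ1) : Set A1 :=
  ⋂ n, (DR u1 u2 D1 D2 n).1 θ1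

def DRinf2 (u1 u2 : A1 → A2 → Θ0 → Θ1 → Θ2 → ℝ)
    (D1 : Θ1 → Set (Θ0 × Θ2 → ℝ)) (D2 : Θ2 → Set (Θ0 × Θ1 → ℝ)) (θ2 : Θ2) : Set A2 :=
  ⋂ n, (DR u1 u2 D1 D2 n).2 θ2

end Defs

theorem bfr_largest_fixed_point {Θ0 Θ1 Θ2 A1 A2 : Type} [Fintype Θ0] [Fintype Θ1] [Fintype Θ2] [Fintype A1] [Fintype A2]
    (u1 u2 : A1 → A2 → Θ0 → Θ1 → Θ2 → ℝ)
    (F1 : Θ1 → Set A1) (F2 : Θ2 → Set A2)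
    (hF1 : ∀ θ1 : Θ1, F1 θ1 = {a1 | ∃ μ : Θ0 × Θ2 × A2 → ℝ, IsProb μ ∧
        (∀ x, μ x ≠ 0 → x.2.2 ∈ F2 x.2.1) ∧ a1 ∈ BR1 u1 μ θ1})
    (hF2 : ∀ θ2 : Θ2, F2 θ2 = {a2 | ∃ μ : Θ0 × Θ1 × A1 → ℝ, IsProb μ ∧
        (∀ x, μ x ≠ 0 → x.2.2 ∈ F1 x.2.1) ∧ a2 ∈ BR2 u2 μ θ2}) :
    (∀ θ1 : Θ1, F1 θ1 ⊆ BFRinf1 u1 u2 θ1) ∧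
    (∀ θ2 : Θ2, F2 θ2 ⊆ BFRinf2 u1 u2 θ2) := by
  have key : ∀ n : ℕ, (∀ θ1, F1 θ1 ⊆ (BFR u1 u2 n).1 θ1) ∧
      (∀ θ2, F2 θ2 ⊆ (BFR u1 u2 n).2 θ2) := by
    intro n
    induction n with
    | zero => exact ⟨fun _ _ _ => trivial, fun _ _ _ => trivial⟩
    | succ n ih =>
      constructor
      · intro θ1 a1 ha1
        refine ⟨ih.1 θ1 ha1, ?_⟩
        rw [hF1] at ha1
        obtain ⟨μ, hμ, hsupp, hbr⟩ := ha1
        exact ⟨μ, hμ, fun x hx => ih.2 x.2.1 (hsupp x hx), hbr⟩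
      · intro θ2 a2 ha2
        refine ⟨ih.2 θ2 ha2, ?_⟩
        rw [hF2] at ha2
        obtain ⟨μ, hμ, hsupp, hbr⟩ := ha2
        exact ⟨μ, hμ, fun x hx => ih.1 x.2.1 (hsupp x hx), hbr⟩
  exact ⟨fun θ1 a1 ha1 => Set.mem_iInter.2 fun n => (key n).1 θ1 ha1,
         fun θ2 a2 ha2 => Set.mem_iInter.2 fun n => (key n).2 θ2 ha2⟩
end

section
/- In a finite Bayesian game, ICR^∞ satisfies the ICR fixed-point property: for every player i and information type (θ_i, y_i), a_i ∈ ICR_i^∞(θ_i, y_i) if and only if there exists μ_i ∈ Δ(Θ_0 × Θ_{-i} × Y_{-i} × A_{-i}) with supp μ_i ⊆ Θ_0 × graph(ICR_{-i}^∞), marg over Θ_0 × Θ_{-i} × Y_{-i} equal to π_i(θ_i, y_i), and a_i a best reply for θ_i to the marginal of μ_i over Θ_0 × Θ_{-i} × A_{-i}. -/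
open Finset

section Aux

variable {Θ0 Θ1 Θ2 A1 A2 Y1 Y2 : Type}
variable [Fintype Θ0] [Fintype Θ1] [Fintype Θ2] [Fintype A1] [Fintype A2]
variable [Fintype Y1] [Fintype Y2]
variable (u1 u2 : A1 → A2 → Θ0 → Θ1 → Θ2 → ℝ)
variable (π1 : Θ1 → Y1 → (Θ0 × Θ2 × Y2 → ℝ)) (π2 : Θ2 → Y2 → (Θ0 × Θ1 × Y1 → ℝ))

lemma ICR_succ_subset (n : ℕ) :
    (∀ θ1 y1, (ICR u1 u2 π1 π2 (n+1)).1 θ1 y1 ⊆ (ICR u1 u2 π1 π2 n).1 θ1 y1) ∧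
    (∀ θ2 y2, (ICR u1 u2 π1 π2 (n+1)).2 θ2 y2 ⊆ (ICR u1 u2 π1 π2 n).2 θ2 y2) := by
  constructor <;> intros <;> exact Set.inter_subset_left

lemma ICR_antitone {m n : ℕ} (h : m ≤ n) :
    (∀ θ1 y1, (ICR u1 u2 π1 π2 n).1 θ1 y1 ⊆ (ICR u1 u2 π1 π2 m).1 θ1 y1) ∧
    (∀ θ2 y2, (ICR u1 u2 π1 π2 n).2 θ2 y2 ⊆ (ICR u1 u2 π1 π2 m).2 θ2 y2) := by
  induction h with
  | refl => exact ⟨fun _ _ => le_refl _, fun _ _ => le_refl _⟩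
  | step h ih =>
      refine ⟨fun θ1 y1 => ?_, fun θ2 y2 => ?_⟩
      · exact ((ICR_succ_subset u1 u2 π1 π2 _).1 θ1 y1).trans (ih.1 θ1 y1)
      · exact ((ICR_succ_subset u1 u2 π1 π2 _).2 θ2 y2).trans (ih.2 θ2 y2)

lemma ICR_succ_congr {p q : ℕ}
    (h : ICR u1 u2 π1 π2 p = ICR u1 u2 π1 π2 q) :
    ICR u1 u2 π1 π2 (p+1) = ICR u1 u2 π1 π2 (q+1) := by
  simp only [ICR]
  rw [h]

lemma ICR_stabilizes :
    ∃ m, ∀ k, m ≤ k → ICR u1 u2 π1 π2 k = ICR u1 u2 π1 π2 m := by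
  have hfin : Finite ((Θ1 → Y1 → Set A1) × (Θ2 → Y2 → Set A2)) := by infer_instance
  obtain ⟨a, b, hne, heq⟩ :=
    Finite.exists_ne_map_eq_of_infinite (fun n => ICR u1 u2 π1 π2 n)
  wlog hab : a < b generalizing a b
  · exact this b a hne.symm heq.symm (by omega)
  -- first show ICR (a+1) = ICR a
  have hstep : ICR u1 u2 π1 π2 (a+1) = ICR u1 u2 π1 π2 a := by
    have h1 := ICR_antitone u1 u2 π1 π2 (Nat.succ_le_of_lt hab)
    have h2 := ICR_succ_subset u1 u2 π1 π2 a
    refine Prod.ext ?_ ?_ <;> funext θ y <;>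
      refine Set.Subset.antisymm ?_ ?_
    · exact h2.1 θ y
    · intro x hx
      have : x ∈ (ICR u1 u2 π1 π2 b).1 θ y := by
        have : (ICR u1 u2 π1 π2 a) = ICR u1 u2 π1 π2 b := heq
        rw [← this]; exact hx
      exact h1.1 θ y this
    · exact h2.2 θ y
    · intro x hx
      have : x ∈ (ICR u1 u2 π1 π2 b).2 θ y := by
        have : (ICR u1 u2 π1 π2 a) = ICR u1 u2 π1 π2 b := heq
        rw [← this]; exact hx
      exact h1.2 θ y this
  refine ⟨a, fun k hk => ?_⟩
  induction hk with
  | refl => rfl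
  | step h ih => exact (ICR_succ_congr u1 u2 π1 π2 ih).trans hstep

end Aux


theorem icr_fixed_point {Θ0 Θ1 Θ2 A1 A2 : Type} [Fintype Θ0] [Fintype Θ1] [Fintype Θ2] [Fintype A1] [Fintype A2]
    (u1 u2 : A1 → A2 → Θ0 → Θ1 → Θ2 → ℝ) {Y1 Y2 : Type} [Fintype Y1] [Fintype Y2]
    (π1 : Θ1 → Y1 → (Θ0 × Θ2 × Y2 → ℝ)) (π2 : Θ2 → Y2 → (Θ0 × Θ1 × Y1 → ℝ))
    (hπ1 : ∀ θ1 y1, IsProb (π1 θ1 y1)) (hπ2 : ∀ θ2 y2, IsProb (π2 θ2 y2))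
    [Nonempty A1] [Nonempty A2] :
    (∀ (θ1 : Θ1) (y1 : Y1) (a1 : A1), a1 ∈ ICRinf1 u1 u2 π1 π2 θ1 y1 ↔
      ∃ μ : Θ0 × Θ2 × Y2 × A2 → ℝ, IsProb μ ∧
        (∀ x, μ x ≠ 0 → x.2.2.2 ∈ ICRinf2 u1 u2 π1 π2 x.2.1 x.2.2.1) ∧
        margY1 μ = π1 θ1 y1 ∧ a1 ∈ BR1 u1 (margA1 μ) θ1) ∧
    (∀ (θ2 : Θ2) (y2 : Y2) (a2 : A2), a2 ∈ ICRinf2 u1 u2 π1 π2 θ2 y2 ↔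
      ∃ μ : Θ0 × Θ1 × Y1 × A1 → ℝ, IsProb μ ∧
        (∀ x, μ x ≠ 0 → x.2.2.2 ∈ ICRinf1 u1 u2 π1 π2 x.2.1 x.2.2.1) ∧
        margY2 μ = π2 θ2 y2 ∧ a2 ∈ BR2 u2 (margA2 μ) θ2) := by
  obtain ⟨m, hm⟩ := ICR_stabilizes u1 u2 π1 π2
  -- ICRinf equals ICR at stage m
  have hinf1 : ∀ θ1 y1, ICRinf1 u1 u2 π1 π2 θ1 y1 = (ICR u1 u2 π1 π2 m).1 θ1 y1 := by
    intro θ1 y1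
    apply Set.Subset.antisymm
    · exact Set.iInter_subset _ m
    · intro a ha
      refine Set.mem_iInter.2 fun n => ?_
      rcases le_or_gt n m with h | h
      · exact (ICR_antitone u1 u2 π1 π2 h).1 θ1 y1 ha
      · rw [hm n h.le]; exact ha
  have hinf2 : ∀ θ2 y2, ICRinf2 u1 u2 π1 π2 θ2 y2 = (ICR u1 u2 π1 π2 m).2 θ2 y2 := by
    intro θ2 y2
    apply Set.Subset.antisymm
    · exact Set.iInter_subset _ m
    · intro a ha
      refine Set.mem_iInter.2 fun n => ?_
      rcases le_or_gt n m with h | h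
      · exact (ICR_antitone u1 u2 π1 π2 h).2 θ2 y2 ha
      · rw [hm n h.le]; exact ha
  constructor
  · intro θ1 y1 a1
    constructor
    · intro ha
      have h1 : a1 ∈ (ICR u1 u2 π1 π2 (m+1)).1 θ1 y1 := Set.mem_iInter.1 ha (m+1)
      simp only [ICR] at h1
      obtain ⟨-, μ, hμ, hsupp, hmarg, hbr⟩ := h1
      refine ⟨μ, hμ, fun x hx => ?_, hmarg, hbr⟩
      rw [hinf2]; exact hsupp x hx
    · rintro ⟨μ, hμ, hsupp, hmarg, hbr⟩
      refine Set.mem_iInter.2 fun n => ?_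
      induction n with
      | zero => simp [ICR]
      | succ n ih =>
          simp only [ICR]
          refine ⟨ih, μ, hμ, fun x hx => ?_, hmarg, hbr⟩
          have := hsupp x hx
          exact Set.iInter_subset _ n this
  · intro θ2 y2 a2
    constructor
    · intro ha
      have h1 : a2 ∈ (ICR u1 u2 π1 π2 (m+1)).2 θ2 y2 := Set.mem_iInter.1 ha (m+1)
      simp only [ICR] at h1
      obtain ⟨-, μ, hμ, hsupp, hmarg, hbr⟩ := h1
      refine ⟨μ, hμ, fun x hx => ?_, hmarg, hbr⟩
      rw [hinf1]; exact hsupp x hx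
    · rintro ⟨μ, hμ, hsupp, hmarg, hbr⟩
      refine Set.mem_iInter.2 fun n => ?_
      induction n with
      | zero => simp [ICR]
      | succ n ih =>
          simp only [ICR]
          refine ⟨ih, μ, hμ, fun x hx => ?_, hmarg, hbr⟩
          have := hsupp x hx
          exact Set.iInter_subset _ n this
end

section
/- In a finite Bayesian game, ICR^∞ is the largest profile of correspondences satisfying the ICR fixed-point property: if (F_1, F_2) with F_i : Θ_i × Y_i → P(A_i) satisfies for all i, (θ_i, y_i) that F_i(θ_i, y_i) equals the set of a_i ∈ A_i admitting a belief μ_i ∈ Δ(Θ_0 × Θ_{-i} × Y_{-i} × A_{-i}) supported on Θ_0 × graph(F_{-i}), with marginal over Θ_0 × Θ_{-i} × Y_{-i} equal to π_i(θ_i, y_i), to which a_i is a best reply for θ_i, then F_i(θ_i, y_i) ⊆ ICR_i^∞(θ_i, y_i). -/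
open Finset

theorem icr_largest_fixed_point {Θ0 Θ1 Θ2 A1 A2 : Type} [Fintype Θ0] [Fintype Θ1] [Fintype Θ2] [Fintype A1] [Fintype A2]
    (u1 u2 : A1 → A2 → Θ0 → Θ1 → Θ2 → ℝ) {Y1 Y2 : Type} [Fintype Y1] [Fintype Y2]
    (π1 : Θ1 → Y1 → (Θ0 × Θ2 × Y2 → ℝ)) (π2 : Θ2 → Y2 → (Θ0 × Θ1 × Y1 → ℝ))
    (hπ1 : ∀ θ1 y1, IsProb (π1 θ1 y1)) (hπ2 : ∀ θ2 y2, IsProb (π2 θ2 y2))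
    (F1 : Θ1 → Y1 → Set A1) (F2 : Θ2 → Y2 → Set A2)
    (hF1 : ∀ (θ1 : Θ1) (y1 : Y1), F1 θ1 y1 =
      {a1 | ∃ μ : Θ0 × Θ2 × Y2 × A2 → ℝ, IsProb μ ∧
        (∀ x, μ x ≠ 0 → x.2.2.2 ∈ F2 x.2.1 x.2.2.1) ∧
        margY1 μ = π1 θ1 y1 ∧ a1 ∈ BR1 u1 (margA1 μ) θ1})
    (hF2 : ∀ (θ2 : Θ2) (y2 : Y2), F2 θ2 y2 =
      {a2 | ∃ μ : Θ0 × Θ1 × Y1 × A1 → ℝ, IsProb μ ∧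
        (∀ x, μ x ≠ 0 → x.2.2.2 ∈ F1 x.2.1 x.2.2.1) ∧
        margY2 μ = π2 θ2 y2 ∧ a2 ∈ BR2 u2 (margA2 μ) θ2}) :
    (∀ (θ1 : Θ1) (y1 : Y1), F1 θ1 y1 ⊆ ICRinf1 u1 u2 π1 π2 θ1 y1) ∧
    (∀ (θ2 : Θ2) (y2 : Y2), F2 θ2 y2 ⊆ ICRinf2 u1 u2 π1 π2 θ2 y2) := by
  have key : ∀ n : ℕ, (∀ θ1 y1, F1 θ1 y1 ⊆ (ICR u1 u2 π1 π2 n).1 θ1 y1) ∧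
      (∀ θ2 y2, F2 θ2 y2 ⊆ (ICR u1 u2 π1 π2 n).2 θ2 y2) := by
    intro n
    induction n with
    | zero => exact ⟨fun _ _ _ _ => trivial, fun _ _ _ _ => trivial⟩
    | succ n ih =>
      constructor
      · intro θ1 y1 a1 ha1
        refine ⟨ih.1 θ1 y1 ha1, ?_⟩
        rw [hF1] at ha1
        obtain ⟨μ, hμ, hsupp, hmarg, hbr⟩ := ha1
        exact ⟨μ, hμ, fun x hx => ih.2 _ _ (hsupp x hx), hmarg, hbr⟩
      · intro θ2 y2 a2 ha2
        refine ⟨ih.2 θ2 y2 ha2, ?_⟩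
        rw [hF2] at ha2
        obtain ⟨μ, hμ, hsupp, hmarg, hbr⟩ := ha2
        exact ⟨μ, hμ, fun x hx => ih.1 _ _ (hsupp x hx), hmarg, hbr⟩
  constructor
  · intro θ1 y1 a1 ha1
    exact Set.mem_iInter.2 fun n => (key n).1 θ1 y1 ha1
  · intro θ2 y2 a2 ha2
    exact Set.mem_iInter.2 fun n => (key n).2 θ2 y2 ha2
end

section
/- For every finite economic environment, every information structure Y, every player i, every information type (θ_i, y_i), and every n ≥ 0, ICR_i^{n,Y}(θ_i, y_i) ⊆ BFR_i^n(θ_i). Consequently, every interim correlated rationalizable action for (θ_i, y_i) under any information structure is belief-free rationalizable for θ_i. -/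
open Finset

section Defs

variable {Θ0 Θ1 Θ2 A1 A2 Y1 Y2 : Type}
variable [Fintype Θ0] [Fintype Θ1] [Fintype Θ2] [Fintype A1] [Fintype A2]
variable [Fintype Y1] [Fintype Y2]

lemma margA1_prob {Θ0 Θ2 Y2 A2 : Type} [Fintype Θ0] [Fintype Θ2] [Fintype Y2] [Fintype A2]
    {μ : Θ0 × Θ2 × Y2 × A2 → ℝ} (h : IsProb μ) : IsProb (margA1 μ) := by
  constructor
  · intro x; exact Finset.sum_nonneg fun y _ => h.1 _
  · let e : (Θ0 × Θ2 × A2) × Y2 ≃ Θ0 × Θ2 × Y2 × A2 :=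
      ⟨fun p => (p.1.1, p.1.2.1, p.2, p.1.2.2),
       fun z => ((z.1, z.2.1, z.2.2.2), z.2.2.1),
       fun _ => rfl, fun _ => rfl⟩
    calc ∑ x, margA1 μ x = ∑ p : (Θ0 × Θ2 × A2) × Y2, μ (e p) := by
          exact (Fintype.sum_prod_type (f := fun p => μ (e p))).symm
      _ = ∑ z, μ z := e.sum_comp μ
      _ = 1 := h.2

lemma margA1_support {Θ0 Θ2 Y2 A2 : Type} [Fintype Θ0] [Fintype Θ2] [Fintype Y2] [Fintype A2]
    {μ : Θ0 × Θ2 × Y2 × A2 → ℝ} {x : Θ0 × Θ2 × A2} (h : margA1 μ x ≠ 0) :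
    ∃ y2, μ (x.1, x.2.1, y2, x.2.2) ≠ 0 := by
  by_contra hc
  push_neg at hc
  exact h (Finset.sum_eq_zero fun y _ => hc y)

lemma margA2_prob {Θ0 Θ1 Y1 A1 : Type} [Fintype Θ0] [Fintype Θ1] [Fintype Y1] [Fintype A1]
    {μ : Θ0 × Θ1 × Y1 × A1 → ℝ} (h : IsProb μ) : IsProb (margA2 μ) := by
  constructor
  · intro x; exact Finset.sum_nonneg fun y _ => h.1 _
  · let e : (Θ0 × Θ1 × A1) × Y1 ≃ Θ0 × Θ1 × Y1 × A1 :=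
      ⟨fun p => (p.1.1, p.1.2.1, p.2, p.1.2.2),
       fun z => ((z.1, z.2.1, z.2.2.2), z.2.2.1),
       fun _ => rfl, fun _ => rfl⟩
    calc ∑ x, margA2 μ x = ∑ p : (Θ0 × Θ1 × A1) × Y1, μ (e p) := by
          exact (Fintype.sum_prod_type (f := fun p => μ (e p))).symm
      _ = ∑ z, μ z := e.sum_comp μ
      _ = 1 := h.2

lemma margA2_support {Θ0 Θ1 Y1 A1 : Type} [Fintype Θ0] [Fintype Θ1] [Fintype Y1] [Fintype A1]
    {μ : Θ0 × Θ1 × Y1 × A1 → ℝ} {x : Θ0 × Θ1 × A1} (h : margA2 μ x ≠ 0) :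
    ∃ y1, μ (x.1, x.2.1, y1, x.2.2) ≠ 0 := by
  by_contra hc
  push_neg at hc
  exact h (Finset.sum_eq_zero fun y _ => hc y)

end Defs

theorem icr_subset_bfr {Θ0 Θ1 Θ2 A1 A2 : Type} [Fintype Θ0] [Fintype Θ1] [Fintype Θ2] [Fintype A1] [Fintype A2]
    (u1 u2 : A1 → A2 → Θ0 → Θ1 → Θ2 → ℝ) {Y1 Y2 : Type} [Fintype Y1] [Fintype Y2]
    (π1 : Θ1 → Y1 → (Θ0 × Θ2 × Y2 → ℝ)) (π2 : Θ2 → Y2 → (Θ0 × Θ1 × Y1 → ℝ))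
    (hπ1 : ∀ θ1 y1, IsProb (π1 θ1 y1)) (hπ2 : ∀ θ2 y2, IsProb (π2 θ2 y2)) :
    (∀ (n : ℕ) (θ1 : Θ1) (y1 : Y1),
        (ICR u1 u2 π1 π2 n).1 θ1 y1 ⊆ (BFR u1 u2 n).1 θ1) ∧
    (∀ (n : ℕ) (θ2 : Θ2) (y2 : Y2),
        (ICR u1 u2 π1 π2 n).2 θ2 y2 ⊆ (BFR u1 u2 n).2 θ2) ∧
    (∀ (θ1 : Θ1) (y1 : Y1), ICRinf1 u1 u2 π1 π2 θ1 y1 ⊆ BFRinf1 u1 u2 θ1) ∧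
    (∀ (θ2 : Θ2) (y2 : Y2), ICRinf2 u1 u2 π1 π2 θ2 y2 ⊆ BFRinf2 u1 u2 θ2) := by
  have key : ∀ n : ℕ,
      (∀ (θ1 : Θ1) (y1 : Y1), (ICR u1 u2 π1 π2 n).1 θ1 y1 ⊆ (BFR u1 u2 n).1 θ1) ∧
      (∀ (θ2 : Θ2) (y2 : Y2), (ICR u1 u2 π1 π2 n).2 θ2 y2 ⊆ (BFR u1 u2 n).2 θ2) := by
    intro n
    induction n with
    | zero => exact ⟨fun _ _ => Set.Subset.rfl, fun _ _ => Set.Subset.rfl⟩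
    | succ n ih =>
      constructor
      · intro θ1 y1 a1 ha1
        obtain ⟨ha0, μ, hμ, hsupp, _, hbr⟩ := ha1
        refine ⟨ih.1 θ1 y1 ha0, margA1 μ, margA1_prob hμ, ?_, hbr⟩
        intro x hx
        obtain ⟨y2, hy2⟩ := margA1_support hx
        exact ih.2 x.2.1 y2 (hsupp _ hy2)
      · intro θ2 y2 a2 ha2
        obtain ⟨ha0, μ, hμ, hsupp, _, hbr⟩ := ha2
        refine ⟨ih.2 θ2 y2 ha0, margA2 μ, margA2_prob hμ, ?_, hbr⟩
        intro x hx
        obtain ⟨y1, hy1⟩ := margA2_support hx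
        exact ih.1 x.2.1 y1 (hsupp _ hy1)
  refine ⟨fun n => (key n).1, fun n => (key n).2, ?_, ?_⟩
  · intro θ1 y1 a1 ha1
    exact Set.mem_iInter.2 fun n => (key n).1 θ1 y1 (Set.mem_iInter.1 ha1 n)
  · intro θ2 y2 a2 ha2
    exact Set.mem_iInter.2 fun n => (key n).2 θ2 y2 (Set.mem_iInter.1 ha2 n)
end

section
/- For every finite economic environment, every player i, every payoff type θ_i, and every a_i ∈ BFR_i^∞(θ_i), there exists a finite information structure Y and a signal y_i ∈ Y_i such that a_i ∈ ICR_i^{∞,Y}(θ_i, y_i). In particular, one may take Y_i = A_i with π_i(θ_i, a_i) derived from the justifying beliefs of the BFR fixed point. -/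
open Finset

section Aux

variable {Θ0 Θ1 Θ2 A1 A2 : Type}
variable [Fintype Θ0] [Fintype Θ1] [Fintype Θ2] [Fintype A1] [Fintype A2]
variable (u1 u2 : A1 → A2 → Θ0 → Θ1 → Θ2 → ℝ)

lemma isProb_nonempty {X : Type} [Fintype X] {μ : X → ℝ} (h : IsProb μ) : Nonempty X := by
  by_contra hc
  rw [not_nonempty_iff] at hc
  have h2 := h.2
  rw [Finset.univ_eq_empty, Finset.sum_empty] at h2
  exact one_ne_zero h2.symm

lemma bfr_anti (n : ℕ) :
    (∀ θ1, (BFR u1 u2 (n+1)).1 θ1 ⊆ (BFR u1 u2 n).1 θ1) ∧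
    (∀ θ2, (BFR u1 u2 (n+1)).2 θ2 ⊆ (BFR u1 u2 n).2 θ2) :=
  ⟨fun _ => Set.inter_subset_left, fun _ => Set.inter_subset_left⟩

lemma bfr_le (m n : ℕ) (h : m ≤ n) :
    (∀ θ1, (BFR u1 u2 n).1 θ1 ⊆ (BFR u1 u2 m).1 θ1) ∧
    (∀ θ2, (BFR u1 u2 n).2 θ2 ⊆ (BFR u1 u2 m).2 θ2) := by
  induction n, h using Nat.le_induction with
  | base => exact ⟨fun _ => subset_rfl, fun _ => subset_rfl⟩
  | succ n hmn ih =>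
      exact ⟨fun θ1 => Set.Subset.trans ((bfr_anti u1 u2 n).1 θ1) (ih.1 θ1),
             fun θ2 => Set.Subset.trans ((bfr_anti u1 u2 n).2 θ2) (ih.2 θ2)⟩

lemma bfr_stab : ∃ N, BFR u1 u2 (N+1) = BFR u1 u2 N := by
  set G : ℕ → Set ((Θ1 × A1) ⊕ (Θ2 × A2)) := fun n =>
    {x | Sum.elim (fun p => p.2 ∈ (BFR u1 u2 n).1 p.1)
        (fun p => p.2 ∈ (BFR u1 u2 n).2 p.1) x} with hG
  have hsub : ∀ n, G (n+1) ⊆ G n := by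
    intro n x hx
    cases x with
    | inl p => exact (bfr_anti u1 u2 n).1 p.1 hx
    | inr p => exact (bfr_anti u1 u2 n).2 p.1 hx
  have hcard : ∀ n, (G (n+1)).ncard ≤ (G n).ncard := fun n =>
    Set.ncard_le_ncard (hsub n) (Set.toFinite _)
  have hex : ∃ N, (G (N+1)).ncard = (G N).ncard := by
    by_contra hc
    push_neg at hc
    have hlt : ∀ n, (G (n+1)).ncard < (G n).ncard := fun n =>
      lt_of_le_of_ne (hcard n) (hc n)
    have hle : ∀ n, (G n).ncard + n ≤ (G 0).ncard := by
      intro n; induction n with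
      | zero => simp
      | succ k ihk => have := hlt k; omega
    have := hle ((G 0).ncard + 1); omega
  obtain ⟨N, hN⟩ := hex
  have hGeq : G (N+1) = G N :=
    Set.eq_of_subset_of_ncard_le (hsub N) (le_of_eq hN.symm) (Set.toFinite _)
  refine ⟨N, ?_⟩
  have hiff := Set.ext_iff.mp hGeq
  have h1 : (BFR u1 u2 (N+1)).1 = (BFR u1 u2 N).1 := by
    funext θ1; ext a1; exact hiff (Sum.inl (θ1, a1))
  have h2 : (BFR u1 u2 (N+1)).2 = (BFR u1 u2 N).2 := by
    funext θ2; ext a2; exact hiff (Sum.inr (θ2, a2))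
  exact Prod.ext h1 h2

lemma bfr_eq_of_ge (N : ℕ) (hN : BFR u1 u2 (N+1) = BFR u1 u2 N) :
    ∀ n, N ≤ n → BFR u1 u2 n = BFR u1 u2 N := by
  intro n hn
  induction n, hn using Nat.le_induction with
  | base => rfl
  | succ n hmn ih =>
      have hrec : BFR u1 u2 (n+1) =
          (fun θ1 => (BFR u1 u2 n).1 θ1 ∩ step1 u1 (BFR u1 u2 n).2 θ1,
           fun θ2 => (BFR u1 u2 n).2 θ2 ∩ step2 u2 (BFR u1 u2 n).1 θ2) := rfl
      rw [hrec, ih]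
      exact hN

lemma bfr_fix :
    (∀ θ1 a1, a1 ∈ BFRinf1 u1 u2 θ1 → ∃ μ : Θ0 × Θ2 × A2 → ℝ, IsProb μ ∧
      (∀ x, μ x ≠ 0 → x.2.2 ∈ BFRinf2 u1 u2 x.2.1) ∧ a1 ∈ BR1 u1 μ θ1) ∧
    (∀ θ2 a2, a2 ∈ BFRinf2 u1 u2 θ2 → ∃ μ : Θ0 × Θ1 × A1 → ℝ, IsProb μ ∧
      (∀ x, μ x ≠ 0 → x.2.2 ∈ BFRinf1 u1 u2 x.2.1) ∧ a2 ∈ BR2 u2 μ θ2) := by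
  obtain ⟨N, hN⟩ := bfr_stab u1 u2
  have hstab := bfr_eq_of_ge u1 u2 N hN
  have hinf1 : ∀ θ1, BFRinf1 u1 u2 θ1 = (BFR u1 u2 N).1 θ1 := by
    intro θ1
    apply subset_antisymm
    · exact Set.iInter_subset _ N
    · intro a ha
      rw [BFRinf1, Set.mem_iInter]
      intro n
      rcases le_or_gt N n with h | h
      · rw [hstab n h]; exact ha
      · exact (bfr_le u1 u2 n N h.le).1 θ1 ha
  have hinf2 : ∀ θ2, BFRinf2 u1 u2 θ2 = (BFR u1 u2 N).2 θ2 := by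
    intro θ2
    apply subset_antisymm
    · exact Set.iInter_subset _ N
    · intro a ha
      rw [BFRinf2, Set.mem_iInter]
      intro n
      rcases le_or_gt N n with h | h
      · rw [hstab n h]; exact ha
      · exact (bfr_le u1 u2 n N h.le).2 θ2 ha
  constructor
  · intro θ1 a1 h
    have h' : a1 ∈ (BFR u1 u2 (N+1)).1 θ1 := by
      rw [hN, ← hinf1]; exact h
    obtain ⟨-, μ, hμ, hsupp, hbr⟩ := h'
    exact ⟨μ, hμ, fun x hx => (hinf2 x.2.1).symm ▸ hsupp x hx, hbr⟩
  · intro θ2 a2 h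
    have h' : a2 ∈ (BFR u1 u2 (N+1)).2 θ2 := by
      rw [hN, ← hinf2]; exact h
    obtain ⟨-, μ, hμ, hsupp, hbr⟩ := h'
    exact ⟨μ, hμ, fun x hx => (hinf1 x.2.1).symm ▸ hsupp x hx, hbr⟩

lemma main_construction (hne1 : Nonempty (Θ0 × Θ2 × A2)) (hne2 : Nonempty (Θ0 × Θ1 × A1)) :
    ∃ (π1 : Θ1 → A1 → (Θ0 × Θ2 × A2 → ℝ)) (π2 : Θ2 → A2 → (Θ0 × Θ1 × A1 → ℝ)),
      (∀ θ1 y1, IsProb (π1 θ1 y1)) ∧ (∀ θ2 y2, IsProb (π2 θ2 y2)) ∧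
      (∀ θ1 a1, a1 ∈ BFRinf1 u1 u2 θ1 → a1 ∈ ICRinf1 u1 u2 π1 π2 θ1 a1) ∧
      (∀ θ2 a2, a2 ∈ BFRinf2 u1 u2 θ2 → a2 ∈ ICRinf2 u1 u2 π1 π2 θ2 a2) := by
  classical
  obtain ⟨fp1, fp2⟩ := bfr_fix u1 u2
  have huP1 : IsProb (fun _ : Θ0 × Θ2 × A2 => (Fintype.card (Θ0 × Θ2 × A2) : ℝ)⁻¹) := by
    constructor
    · intro x; positivity
    · rw [Finset.sum_const, Finset.card_univ, nsmul_eq_mul]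
      have hpos : (0:ℝ) < Fintype.card (Θ0 × Θ2 × A2) := by
        exact_mod_cast Fintype.card_pos
      exact mul_inv_cancel₀ hpos.ne'
  have huP2 : IsProb (fun _ : Θ0 × Θ1 × A1 => (Fintype.card (Θ0 × Θ1 × A1) : ℝ)⁻¹) := by
    constructor
    · intro x; positivity
    · rw [Finset.sum_const, Finset.card_univ, nsmul_eq_mul]
      have hpos : (0:ℝ) < Fintype.card (Θ0 × Θ1 × A1) := by
        exact_mod_cast Fintype.card_pos
      exact mul_inv_cancel₀ hpos.ne'
  have fp1' : ∀ θ1 a1, ∃ μ : Θ0 × Θ2 × A2 → ℝ, IsProb μ ∧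
      (a1 ∈ BFRinf1 u1 u2 θ1 →
        (∀ x, μ x ≠ 0 → x.2.2 ∈ BFRinf2 u1 u2 x.2.1) ∧ a1 ∈ BR1 u1 μ θ1) := by
    intro θ1 a1
    by_cases h : a1 ∈ BFRinf1 u1 u2 θ1
    · obtain ⟨μ, hp, hs, hb⟩ := fp1 θ1 a1 h
      exact ⟨μ, hp, fun _ => ⟨hs, hb⟩⟩
    · exact ⟨_, huP1, fun hc => absurd hc h⟩
  have fp2' : ∀ θ2 a2, ∃ μ : Θ0 × Θ1 × A1 → ℝ, IsProb μ ∧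
      (a2 ∈ BFRinf2 u1 u2 θ2 →
        (∀ x, μ x ≠ 0 → x.2.2 ∈ BFRinf1 u1 u2 x.2.1) ∧ a2 ∈ BR2 u2 μ θ2) := by
    intro θ2 a2
    by_cases h : a2 ∈ BFRinf2 u1 u2 θ2
    · obtain ⟨μ, hp, hs, hb⟩ := fp2 θ2 a2 h
      exact ⟨μ, hp, fun _ => ⟨hs, hb⟩⟩
    · exact ⟨_, huP2, fun hc => absurd hc h⟩
  choose ν1 hν1P hν1S using fp1'
  choose ν2 hν2P hν2S using fp2'
  have key : ∀ n,
      (∀ θ1 a1, a1 ∈ BFRinf1 u1 u2 θ1 → a1 ∈ (ICR u1 u2 ν1 ν2 n).1 θ1 a1) ∧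
      (∀ θ2 a2, a2 ∈ BFRinf2 u1 u2 θ2 → a2 ∈ (ICR u1 u2 ν1 ν2 n).2 θ2 a2) := by
    intro n
    induction n with
    | zero => exact ⟨fun _ _ _ => Set.mem_univ _, fun _ _ _ => Set.mem_univ _⟩
    | succ n ih =>
        constructor
        · intro θ1 a1 h
          refine ⟨ih.1 θ1 a1 h, ?_⟩
          obtain ⟨hS, hB⟩ := hν1S θ1 a1 h
          refine ⟨fun x => if x.2.2.2 = x.2.2.1 then ν1 θ1 a1 (x.1, x.2.1, x.2.2.1) else 0,
            ⟨?_, ?_⟩, ?_, ?_, ?_⟩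
          · intro x; dsimp only
            split
            · exact (hν1P θ1 a1).1 _
            · exact le_refl 0
          · have h1 := (hν1P θ1 a1).2
            simp only [Fintype.sum_prod_type] at h1 ⊢
            simpa [Finset.sum_ite_eq'] using h1
          · intro x hx
            dsimp only at hx
            by_cases he : x.2.2.2 = x.2.2.1
            · rw [if_pos he] at hx
              have hmem : x.2.2.1 ∈ BFRinf2 u1 u2 x.2.1 := hS (x.1, x.2.1, x.2.2.1) hx
              rw [he]
              exact ih.2 x.2.1 x.2.2.1 hmem
            · rw [if_neg he] at hx
              exact absurd rfl hx
          · funext z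
            simp [margY1, Finset.sum_ite_eq']
          · have hmarg : margA1 (fun x : Θ0 × Θ2 × A2 × A2 =>
                if x.2.2.2 = x.2.2.1 then ν1 θ1 a1 (x.1, x.2.1, x.2.2.1) else 0) = ν1 θ1 a1 := by
              funext z
              simp [margA1, Finset.sum_ite_eq]
            rw [hmarg]
            exact hB
        · intro θ2 a2 h
          refine ⟨ih.2 θ2 a2 h, ?_⟩
          obtain ⟨hS, hB⟩ := hν2S θ2 a2 h
          refine ⟨fun x => if x.2.2.2 = x.2.2.1 then ν2 θ2 a2 (x.1, x.2.1, x.2.2.1) else 0,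
            ⟨?_, ?_⟩, ?_, ?_, ?_⟩
          · intro x; dsimp only
            split
            · exact (hν2P θ2 a2).1 _
            · exact le_refl 0
          · have h1 := (hν2P θ2 a2).2
            simp only [Fintype.sum_prod_type] at h1 ⊢
            simpa [Finset.sum_ite_eq'] using h1
          · intro x hx
            dsimp only at hx
            by_cases he : x.2.2.2 = x.2.2.1
            · rw [if_pos he] at hx
              have hmem : x.2.2.1 ∈ BFRinf1 u1 u2 x.2.1 := hS (x.1, x.2.1, x.2.2.1) hx
              rw [he]
              exact ih.1 x.2.1 x.2.2.1 hmem
            · rw [if_neg he] at hx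
              exact absurd rfl hx
          · funext z
            simp [margY2, Finset.sum_ite_eq']
          · have hmarg : margA2 (fun x : Θ0 × Θ1 × A1 × A1 =>
                if x.2.2.2 = x.2.2.1 then ν2 θ2 a2 (x.1, x.2.1, x.2.2.1) else 0) = ν2 θ2 a2 := by
              funext z
              simp [margA2, Finset.sum_ite_eq]
            rw [hmarg]
            exact hB
  refine ⟨ν1, ν2, hν1P, hν2P, ?_, ?_⟩
  · intro θ1 a1 h
    exact Set.mem_iInter.mpr fun n => (key n).1 θ1 a1 h
  · intro θ2 a2 h
    exact Set.mem_iInter.mpr fun n => (key n).2 θ2 a2 h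

end Aux

theorem bfr_exists_info_structure {Θ0 Θ1 Θ2 A1 A2 : Type} [Fintype Θ0] [Fintype Θ1] [Fintype Θ2] [Fintype A1] [Fintype A2]
    (u1 u2 : A1 → A2 → Θ0 → Θ1 → Θ2 → ℝ)
    [Nonempty A1] [Nonempty A2] :
    (∀ (θ1 : Θ1) (a1 : A1), a1 ∈ BFRinf1 u1 u2 θ1 →
      ∃ (Y1 Y2 : Type) (_ : Fintype Y1) (_ : Fintype Y2)
        (π1 : Θ1 → Y1 → (Θ0 × Θ2 × Y2 → ℝ)) (π2 : Θ2 → Y2 → (Θ0 × Θ1 × Y1 → ℝ)),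
        (∀ θ1 y1, IsProb (π1 θ1 y1)) ∧ (∀ θ2 y2, IsProb (π2 θ2 y2)) ∧
        ∃ y1 : Y1, a1 ∈ ICRinf1 u1 u2 π1 π2 θ1 y1) ∧
    (∀ (θ2 : Θ2) (a2 : A2), a2 ∈ BFRinf2 u1 u2 θ2 →
      ∃ (Y1 Y2 : Type) (_ : Fintype Y1) (_ : Fintype Y2)
        (π1 : Θ1 → Y1 → (Θ0 × Θ2 × Y2 → ℝ)) (π2 : Θ2 → Y2 → (Θ0 × Θ1 × Y1 → ℝ)),
        (∀ θ1 y1, IsProb (π1 θ1 y1)) ∧ (∀ θ2 y2, IsProb (π2 θ2 y2)) ∧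
        ∃ y2 : Y2, a2 ∈ ICRinf2 u1 u2 π1 π2 θ2 y2) := by
  constructor
  · intro θ1 a1 h
    have h1 : a1 ∈ (BFR u1 u2 1).1 θ1 := Set.iInter_subset _ 1 h
    obtain ⟨-, μ, hμ, -⟩ := h1
    obtain ⟨θ0, θ2, -⟩ := (isProb_nonempty hμ).some
    obtain ⟨π1, π2, hP1, hP2, k1, -⟩ :=
      main_construction u1 u2 ⟨⟨θ0, θ2, Classical.arbitrary A2⟩⟩
        ⟨⟨θ0, θ1, Classical.arbitrary A1⟩⟩
    exact ⟨A1, A2, inferInstance, inferInstance, π1, π2, hP1, hP2, a1, k1 θ1 a1 h⟩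
  · intro θ2 a2 h
    have h1 : a2 ∈ (BFR u1 u2 1).2 θ2 := Set.iInter_subset _ 1 h
    obtain ⟨-, μ, hμ, -⟩ := h1
    obtain ⟨θ0, θ1, -⟩ := (isProb_nonempty hμ).some
    obtain ⟨π1, π2, hP1, hP2, -, k2⟩ :=
      main_construction u1 u2 ⟨⟨θ0, θ2, Classical.arbitrary A2⟩⟩
        ⟨⟨θ0, θ1, Classical.arbitrary A1⟩⟩
    exact ⟨A1, A2, inferInstance, inferInstance, π1, π2, hP1, hP2, a2, k2 θ2 a2 h⟩
end

section
/- In a finite Bayesian game, if s = (s_1, s_2) is a Bayes-Nash equilibrium strategy profile, then for every player i and every information type (θ_i, y_i), the action s_i(θ_i, y_i) is interim correlated rationalizable: s_i(θ_i, y_i) ∈ ICR_i^{∞,Y}(θ_i, y_i). -/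
open Finset

theorem bne_subset_icr {Θ0 Θ1 Θ2 A1 A2 : Type} [Fintype Θ0] [Fintype Θ1] [Fintype Θ2] [Fintype A1] [Fintype A2]
    (u1 u2 : A1 → A2 → Θ0 → Θ1 → Θ2 → ℝ) {Y1 Y2 : Type} [Fintype Y1] [Fintype Y2]
    (π1 : Θ1 → Y1 → (Θ0 × Θ2 × Y2 → ℝ)) (π2 : Θ2 → Y2 → (Θ0 × Θ1 × Y1 → ℝ))
    (hπ1 : ∀ θ1 y1, IsProb (π1 θ1 y1)) (hπ2 : ∀ θ2 y2, IsProb (π2 θ2 y2))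
    [DecidableEq A1] [DecidableEq A2]
    (s1 : Θ1 → Y1 → A1) (s2 : Θ2 → Y2 → A2)
    (hs : IsBNE u1 u2 π1 π2 s1 s2) :
    (∀ (θ1 : Θ1) (y1 : Y1), s1 θ1 y1 ∈ ICRinf1 u1 u2 π1 π2 θ1 y1) ∧
    (∀ (θ2 : Θ2) (y2 : Y2), s2 θ2 y2 ∈ ICRinf2 u1 u2 π1 π2 θ2 y2) := by
  have key : ∀ n, (∀ θ1 y1, s1 θ1 y1 ∈ (ICR u1 u2 π1 π2 n).1 θ1 y1) ∧
      (∀ θ2 y2, s2 θ2 y2 ∈ (ICR u1 u2 π1 π2 n).2 θ2 y2) := by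
    intro n
    induction n with
    | zero => exact ⟨fun _ _ => Set.mem_univ _, fun _ _ => Set.mem_univ _⟩
    | succ n ih =>
      constructor
      · intro θ1 y1
        refine ⟨ih.1 θ1 y1, ?_⟩
        refine ⟨fun x => if s2 x.2.1 x.2.2.1 = x.2.2.2 then
            π1 θ1 y1 (x.1, x.2.1, x.2.2.1) else 0, ⟨?_, ?_⟩, ?_, ?_, ?_⟩
        · intro x
          dsimp only; split; · exact (hπ1 θ1 y1).1 _
          · exact le_rfl
        · simp only [Fintype.sum_prod_type, Finset.sum_ite_eq, Finset.mem_univ, if_true]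
          rw [← (hπ1 θ1 y1).2]; simp [Fintype.sum_prod_type]
        · intro x hx
          by_cases h : s2 x.2.1 x.2.2.1 = x.2.2.2
          · rw [← h]; exact ih.2 x.2.1 x.2.2.1
          · simp [h] at hx
        · funext x
          show (∑ a2 : A2, if s2 x.2.1 x.2.2 = a2 then π1 θ1 y1 (x.1, x.2.1, x.2.2) else 0)
              = π1 θ1 y1 x
          simp [Finset.sum_ite_eq]
        · have : margA1 (fun x : Θ0 × Θ2 × Y2 × A2 => if s2 x.2.1 x.2.2.1 = x.2.2.2 then
              π1 θ1 y1 (x.1, x.2.1, x.2.2.1) else 0) = push1 π1 s2 θ1 y1 := rfl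
          rw [this]
          exact hs.1 θ1 y1
      · intro θ2 y2
        refine ⟨ih.2 θ2 y2, ?_⟩
        refine ⟨fun x => if s1 x.2.1 x.2.2.1 = x.2.2.2 then
            π2 θ2 y2 (x.1, x.2.1, x.2.2.1) else 0, ⟨?_, ?_⟩, ?_, ?_, ?_⟩
        · intro x
          dsimp only; split; · exact (hπ2 θ2 y2).1 _
          · exact le_rfl
        · simp only [Fintype.sum_prod_type, Finset.sum_ite_eq, Finset.mem_univ, if_true]
          rw [← (hπ2 θ2 y2).2]; simp [Fintype.sum_prod_type]
        · intro x hx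
          by_cases h : s1 x.2.1 x.2.2.1 = x.2.2.2
          · rw [← h]; exact ih.1 x.2.1 x.2.2.1
          · simp [h] at hx
        · funext x
          show (∑ a1 : A1, if s1 x.2.1 x.2.2 = a1 then π2 θ2 y2 (x.1, x.2.1, x.2.2) else 0)
              = π2 θ2 y2 x
          simp [Finset.sum_ite_eq]
        · have : margA2 (fun x : Θ0 × Θ1 × Y1 × A1 => if s1 x.2.1 x.2.2.1 = x.2.2.2 then
              π2 θ2 y2 (x.1, x.2.1, x.2.2.1) else 0) = push2 π2 s1 θ2 y2 := rfl
          rw [this]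
          exact hs.2 θ2 y2
  exact ⟨fun θ1 y1 => Set.mem_iInter.2 fun n => (key n).1 θ1 y1,
         fun θ2 y2 => Set.mem_iInter.2 fun n => (key n).2 θ2 y2⟩
end

section
/- (Consistency direction) Let Δ be an informational restriction and Y an information structure consistent with Δ (i.e., marg_{Θ_0 × Θ_{-i}} π_i(θ_i, y_i) ∈ Δ_{i,θ_i} for all i and (θ_i, y_i)). Then for every player i, every information type (θ_i, y_i), and every n ≥ 0: a_i ∈ ICR_i^{n,Y}(θ_i, y_i) implies a_i ∈ ΔR_i^n(θ_i). In particular ICR_i^{∞,Y}(θ_i, y_i) ⊆ ΔR_i^∞(θ_i). -/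
open Finset

theorem icr_subset_dr_of_consistent {Θ0 Θ1 Θ2 A1 A2 : Type} [Fintype Θ0] [Fintype Θ1] [Fintype Θ2] [Fintype A1] [Fintype A2]
    (u1 u2 : A1 → A2 → Θ0 → Θ1 → Θ2 → ℝ) (D1 : Θ1 → Set (Θ0 × Θ2 → ℝ)) (D2 : Θ2 → Set (Θ0 × Θ1 → ℝ)) {Y1 Y2 : Type} [Fintype Y1] [Fintype Y2]
    (π1 : Θ1 → Y1 → (Θ0 × Θ2 × Y2 → ℝ)) (π2 : Θ2 → Y2 → (Θ0 × Θ1 × Y1 → ℝ))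
    (hπ1 : ∀ θ1 y1, IsProb (π1 θ1 y1)) (hπ2 : ∀ θ2 y2, IsProb (π2 θ2 y2))
    (hcons1 : (∀ (θ1 : Θ1) (y1 : Y1), (fun p : Θ0 × Θ2 => ∑ y2 : Y2, π1 θ1 y1 (p.1, p.2, y2)) ∈ D1 θ1))
    (hcons2 : (∀ (θ2 : Θ2) (y2 : Y2), (fun p : Θ0 × Θ1 => ∑ y1 : Y1, π2 θ2 y2 (p.1, p.2, y1)) ∈ D2 θ2)) :
    (∀ (n : ℕ) (θ1 : Θ1) (y1 : Y1),
        (ICR u1 u2 π1 π2 n).1 θ1 y1 ⊆ (DR u1 u2 D1 D2 n).1 θ1) ∧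
    (∀ (n : ℕ) (θ2 : Θ2) (y2 : Y2),
        (ICR u1 u2 π1 π2 n).2 θ2 y2 ⊆ (DR u1 u2 D1 D2 n).2 θ2) ∧
    (∀ (θ1 : Θ1) (y1 : Y1), ICRinf1 u1 u2 π1 π2 θ1 y1 ⊆ DRinf1 u1 u2 D1 D2 θ1) ∧
    (∀ (θ2 : Θ2) (y2 : Y2), ICRinf2 u1 u2 π1 π2 θ2 y2 ⊆ DRinf2 u1 u2 D1 D2 θ2) := by
  have key : ∀ n : ℕ,
      (∀ θ1 y1, (ICR u1 u2 π1 π2 n).1 θ1 y1 ⊆ (DR u1 u2 D1 D2 n).1 θ1) ∧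
      (∀ θ2 y2, (ICR u1 u2 π1 π2 n).2 θ2 y2 ⊆ (DR u1 u2 D1 D2 n).2 θ2) := by
    intro n
    induction n with
    | zero => exact ⟨fun _ _ _ _ => trivial, fun _ _ _ _ => trivial⟩
    | succ n ih =>
      constructor
      · intro θ1 y1 a1 ha1
        obtain ⟨hmem, μ, hprob, hsupp, hmarg, hbr⟩ := ha1
        refine ⟨ih.1 θ1 y1 hmem, margA1 μ, ⟨?_, ?_⟩, ?_, ?_, hbr⟩
        · intro x; exact Finset.sum_nonneg fun y2 _ => hprob.1 _
        · rw [← hprob.2]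
          simp only [margA1, Fintype.sum_prod_type]
          exact Finset.sum_congr rfl fun _ _ => Finset.sum_congr rfl fun _ _ =>
            Finset.sum_comm
        · have h2 : (fun p : Θ0 × Θ2 => ∑ a2 : A2, margA1 μ (p.1, p.2, a2)) =
              fun p : Θ0 × Θ2 => ∑ y2 : Y2, π1 θ1 y1 (p.1, p.2, y2) := by
            funext p
            simp only [margA1]
            rw [Finset.sum_comm]
            exact Finset.sum_congr rfl fun y2 _ => by rw [← hmarg]; rfl
          rw [h2]; exact hcons1 θ1 y1
        · intro x hx
          have : ∃ y2 : Y2, μ (x.1, x.2.1, y2, x.2.2) ≠ 0 := by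
            by_contra h
            push_neg at h
            exact hx (Finset.sum_eq_zero fun y2 _ => h y2)
          obtain ⟨y2, hy2⟩ := this
          exact ih.2 x.2.1 y2 (hsupp (x.1, x.2.1, y2, x.2.2) hy2)
      · intro θ2 y2 a2 ha2
        obtain ⟨hmem, μ, hprob, hsupp, hmarg, hbr⟩ := ha2
        refine ⟨ih.2 θ2 y2 hmem, margA2 μ, ⟨?_, ?_⟩, ?_, ?_, hbr⟩
        · intro x; exact Finset.sum_nonneg fun y1 _ => hprob.1 _
        · rw [← hprob.2]
          simp only [margA2, Fintype.sum_prod_type]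
          exact Finset.sum_congr rfl fun _ _ => Finset.sum_congr rfl fun _ _ =>
            Finset.sum_comm
        · have h2 : (fun p : Θ0 × Θ1 => ∑ a1 : A1, margA2 μ (p.1, p.2, a1)) =
              fun p : Θ0 × Θ1 => ∑ y1 : Y1, π2 θ2 y2 (p.1, p.2, y1) := by
            funext p
            simp only [margA2]
            rw [Finset.sum_comm]
            exact Finset.sum_congr rfl fun y1 _ => by rw [← hmarg]; rfl
          rw [h2]; exact hcons2 θ2 y2
        · intro x hx
          have : ∃ y1 : Y1, μ (x.1, x.2.1, y1, x.2.2) ≠ 0 := by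
            by_contra h
            push_neg at h
            exact hx (Finset.sum_eq_zero fun y1 _ => h y1)
          obtain ⟨y1, hy1⟩ := this
          exact ih.1 x.2.1 y1 (hsupp (x.1, x.2.1, y1, x.2.2) hy1)
  refine ⟨fun n => (key n).1, fun n => (key n).2, ?_, ?_⟩
  · intro θ1 y1 a ha
    exact Set.mem_iInter.2 fun n => (key n).1 θ1 y1 (Set.mem_iInter.1 ha n)
  · intro θ2 y2 a ha
    exact Set.mem_iInter.2 fun n => (key n).2 θ2 y2 (Set.mem_iInter.1 ha n)
end
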